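/- For real v with −1/4 < v < 2/19, the quantity (22 + 7v − |14 + 29v| − |4 + 16v|)/12 equals (2 − 19v)/6 and is strictly positive; hence the lower triangular matrix with row pattern (1/12)·(4 + 16v, −(14 + 29v), 22 + 7v) is strictly diagonally dominant and its inverse has infinity norm at most 6/(2 − 19v). -/

import Mathlib

open Matrix Finset

/-! A matrix whose rows have diagonal entry exceeding the off-diagonal absolute row sum by at
least `m > 0` satisfies `m * ‖x‖∞ ≤ ‖A x‖∞`: look at the row where `|x i|` is maximal. Such `A`
is invertible (Gershgorin), and applying the estimate to `A⁻¹ y` for the sign vector `y` of a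
row of `A⁻¹` bounds the absolute row sums of `A⁻¹` by `1 / m`. For the banded BDF3 matrix
every row has margin at least `d - |a| - |b| = (2 - 19v)/6`, which is positive on
`(-1/4, 2/19)`, where both subdiagonal coefficients `14 + 29v` and `4 + 16v` are nonnegative. -/

noncomputable def infNorm {N : ℕ} (A : Matrix (Fin N) (Fin N) ℝ) : ℝ :=
  ⨆ i, ∑ j, |A i j|

noncomputable def logNormLower {N : ℕ} (A : Matrix (Fin N) (Fin N) ℝ) : ℝ :=
  ⨅ i, (A i i - ∑ j ∈ Finset.univ.erase i, |A i j|)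

section DiagonalDominance

variable {ι : Type*} [Fintype ι] [DecidableEq ι] {A : Matrix ι ι ℝ} {m : ℝ}

theorem mul_norm_le_norm_mulVec_of_diagDominant
    (hA : ∀ i, m ≤ A i i - ∑ j ∈ univ.erase i, |A i j|) (x : ι → ℝ) :
    m * ‖x‖ ≤ ‖A *ᵥ x‖ := by
  rcases isEmpty_or_nonempty ι with _ | _
  · simp [Subsingleton.elim x 0]
  obtain ⟨i, hi⟩ := Finite.exists_max fun j => |x j|
  have hnorm : ‖x‖ = |x i| :=
    le_antisymm ((pi_norm_le_iff_of_nonneg (abs_nonneg _)).2 hi) (norm_le_pi_norm x i)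
  set S := ∑ j ∈ univ.erase i, |A i j|
  set T := ∑ j ∈ univ.erase i, A i j * x j
  have hsplit : (A *ᵥ x) i = A i i * x i + T := (add_sum_erase _ _ (mem_univ i)).symm
  have hoff : |T| ≤ S * |x i| := by
    rw [sum_mul]
    refine (abs_sum_le_sum_abs _ _).trans (sum_le_sum fun j _ => ?_)
    rw [abs_mul]
    exact mul_le_mul_of_nonneg_left (hi j) (abs_nonneg _)
  calc m * ‖x‖ ≤ (A i i - S) * |x i| := hnorm ▸ mul_le_mul_of_nonneg_right (hA i) (norm_nonneg x)
    _ ≤ |A i i * x i| - |T| := by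
        rw [abs_mul]
        nlinarith [le_abs_self (A i i), abs_nonneg (x i)]
    _ ≤ |(A *ᵥ x) i| := by
        simpa [hsplit] using abs_sub_abs_le_abs_sub (A i i * x i) (-T)
    _ ≤ ‖A *ᵥ x‖ := norm_le_pi_norm (A *ᵥ x) i

theorem isUnit_det_of_diagDominant (hm : 0 < m)
    (hA : ∀ i, m ≤ A i i - ∑ j ∈ univ.erase i, |A i j|) : IsUnit A.det :=
  isUnit_iff_ne_zero.2 <| det_ne_zero_of_sum_row_lt_diag fun k => by
    simp only [Real.norm_eq_abs]
    linarith [hA k, le_abs_self (A k k)]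

theorem sum_abs_row_le_of_mul_eq_one (hm : 0 < m)
    (hA : ∀ i, m ≤ A i i - ∑ j ∈ univ.erase i, |A i j|) {B : Matrix ι ι ℝ} (hAB : A * B = 1)
    (i : ι) : ∑ j, |B i j| ≤ 1 / m := by
  set y : ι → ℝ := fun j => if 0 ≤ B i j then 1 else -1
  have hy : ‖y‖ ≤ 1 := (pi_norm_le_iff_of_nonneg zero_le_one).2 fun j => by
    by_cases h : 0 ≤ B i j <;> simp [y, h]
  have hrow : (B *ᵥ y) i = ∑ j, |B i j| := sum_congr rfl fun j _ => by
    by_cases h : 0 ≤ B i j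
    · simp [y, h, abs_of_nonneg h]
    · simp [y, h, abs_of_neg (not_le.1 h)]
  have hexp := mul_norm_le_norm_mulVec_of_diagDominant hA (B *ᵥ y)
  rw [mulVec_mulVec, hAB, one_mulVec] at hexp
  rw [le_div_iff₀ hm, ← hrow, mul_comm]
  calc m * (B *ᵥ y) i ≤ m * ‖B *ᵥ y‖ :=
        mul_le_mul_of_nonneg_left
          ((le_abs_self _).trans (Real.norm_eq_abs _ ▸ norm_le_pi_norm _ i)) hm.le
    _ ≤ 1 := hexp.trans hy

end DiagonalDominance

theorem logNormLower_le {N : ℕ} (A : Matrix (Fin N) (Fin N) ℝ) (i : Fin N) :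
    logNormLower A ≤ A i i - ∑ j ∈ univ.erase i, |A i j| :=
  ciInf_le (Finite.bddBelow_range _) i

theorem exists_inverse_infNorm_le_of_logNormLower_pos {N : ℕ} (A : Matrix (Fin N) (Fin N) ℝ)
    (hA : 0 < logNormLower A) :
    ∃ B : Matrix (Fin N) (Fin N) ℝ, A * B = 1 ∧ B * A = 1 ∧ infNorm B ≤ 1 / logNormLower A := by
  have hdet := isUnit_det_of_diagDominant hA (logNormLower_le A)
  refine ⟨A⁻¹, mul_nonsing_inv A hdet, nonsing_inv_mul A hdet, ?_⟩
  rcases isEmpty_or_nonempty (Fin N) with _ | _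
  · simp [infNorm, hA.le]
  exact ciSup_le (sum_abs_row_le_of_mul_eq_one hA (logNormLower_le A) (mul_nonsing_inv A hdet))

theorem sum_ite_le_of_subsingleton {α : Type*} (s : Finset α) (p : α → Prop) [DecidablePred p]
    (hp : ∀ a b, p a → p b → a = b) {c : ℝ} (hc : 0 ≤ c) :
    ∑ j ∈ s, (if p j then c else 0) ≤ c := by
  rw [← sum_filter, sum_const, nsmul_eq_mul]
  refine mul_le_of_le_one_left hc ?_
  exact_mod_cast card_le_one.2 fun a ha b hb => hp a b (mem_filter.1 ha).2 (mem_filter.1 hb).2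

theorem sub_abs_sub_abs_le_of_banded {N : ℕ} {d a b : ℝ} {A : Matrix (Fin N) (Fin N) ℝ}
    (hA : ∀ i j : Fin N, A i j =
      if i = j then d
      else if (i : ℕ) = (j : ℕ) + 1 then a
      else if (i : ℕ) = (j : ℕ) + 2 then b else 0)
    (i : Fin N) : d - |a| - |b| ≤ A i i - ∑ j ∈ univ.erase i, |A i j| := by
  have hrow : ∀ j ∈ univ.erase i, |A i j| ≤
      (if (i : ℕ) = (j : ℕ) + 1 then |a| else 0) + (if (i : ℕ) = (j : ℕ) + 2 then |b| else 0) := by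
    intro j hj
    rw [hA, if_neg (ne_of_mem_erase hj).symm]
    split_ifs <;> first | omega | simp
  have hunique (k : ℕ) (j j' : Fin N) (h : (i : ℕ) = j + k) (h' : (i : ℕ) = j' + k) : j = j' :=
    Fin.ext (by omega)
  have hsum := sum_le_sum hrow
  rw [sum_add_distrib] at hsum
  rw [hA i i, if_pos rfl]
  linarith [sum_ite_le_of_subsingleton (univ.erase i) _ (hunique 1) (abs_nonneg a),
    sum_ite_le_of_subsingleton (univ.erase i) _ (hunique 2) (abs_nonneg b)]

theorem stmt19 (v : ℝ) (hv1 : -(1 / 4) < v) (hv2 : v < 2 / 19) :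
    ((22 + 7 * v - |14 + 29 * v| - |4 + 16 * v|) / 12 = (2 - 19 * v) / 6 ∧
      0 < (2 - 19 * v) / 6) ∧
    ∀ N : ℕ, 1 ≤ N → ∀ A : Matrix (Fin N) (Fin N) ℝ,
      (∀ i j : Fin N, A i j =
        if i = j then (22 + 7 * v) / 12
        else if (i : ℕ) = (j : ℕ) + 1 then -(14 + 29 * v) / 12
        else if (i : ℕ) = (j : ℕ) + 2 then (4 + 16 * v) / 12 else 0) →
      0 < logNormLower A ∧
      ∃ B : Matrix (Fin N) (Fin N) ℝ,
        A * B = 1 ∧ B * A = 1 ∧ infNorm B ≤ 6 / (2 - 19 * v) := by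
  have hmargin : (22 + 7 * v - |14 + 29 * v| - |4 + 16 * v|) / 12 = (2 - 19 * v) / 6 := by
    rw [abs_of_nonneg (by linarith), abs_of_nonneg (by linarith)]
    ring
  have hpos : 0 < (2 - 19 * v) / 6 := by linarith
  refine ⟨⟨hmargin, hpos⟩, fun N hN A hA => ?_⟩
  have hrows (i : Fin N) : (2 - 19 * v) / 6 ≤ A i i - ∑ j ∈ univ.erase i, |A i j| := by
    refine le_of_eq_of_le ?_ (sub_abs_sub_abs_le_of_banded hA i)
    rw [← hmargin, neg_div, abs_neg, abs_div, abs_div, abs_of_pos (by norm_num : (0 : ℝ) < 12)]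
    ring
  have : Nonempty (Fin N) := ⟨⟨0, hN⟩⟩
  have hlog : (2 - 19 * v) / 6 ≤ logNormLower A := le_ciInf hrows
  have hlog_pos := hpos.trans_le hlog
  obtain ⟨B, hAB, hBA, hB⟩ := exists_inverse_infNorm_le_of_logNormLower_pos A hlog_pos
  refine ⟨hlog_pos, B, hAB, hBA, hB.trans ?_⟩
  calc 1 / logNormLower A ≤ 1 / ((2 - 19 * v) / 6) := one_div_le_one_div_of_le hpos hlog
    _ = 6 / (2 - 19 * v) := by rw [one_div, inv_div]
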